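/- Let Δ be a pure simplicial complex of dimension d-1 ≥ 1 and let U be a subset of its vertex set such that every facet of Δ contains exactly one vertex of U. If Δ is Cohen-Macaulay over k and the link of every vertex u ∈ U is doubly Cohen-Macaulay over k, then the complex Δ \ U (all faces of Δ disjoint from U) is doubly Cohen-Macaulay over k. -/

import Mathlib

open Finset

/-- The Möbius function of a finite partial order, valued in `ℤ`. -/
noncomputable def pmu (α : Type*) [PartialOrder α] [Finite α] : α → α → ℤ :=
  letI := Fintype.ofFinite α
  letI := Classical.decEq α
  letI : DecidableRel ((· ≤ ·) : α → α → Prop) := Classical.decRel _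
  letI : DecidableRel ((· < ·) : α → α → Prop) := Classical.decRel _
  letI := Fintype.toLocallyFiniteOrder (α := α)
  fun x y => IncidenceAlgebra.mu ℤ x y

variable {α : Type*} [PartialOrder α]

/-- `c` is a maximal chain of the subposet `S`. -/
def IsMaxChainIn (S : Set α) (c : Finset α) : Prop :=
  ↑c ⊆ S ∧ IsChain (· ≤ ·) (c : Set α) ∧
    ∀ c' : Finset α, ↑c' ⊆ S → IsChain (· ≤ ·) (c' : Set α) → c ⊆ c' → c = c'

/-- The interval `[x,y]` is graded of rank `r`: every maximal chain of it has `r+1` elements. -/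
def IntervalGraded (x y : α) (r : ℕ) : Prop :=
  ∀ c : Finset α, IsMaxChainIn (Set.Icc x y) c → c.card = r + 1

/-- The subposet `S` is graded of rank `d`: every maximal chain of `S` has `d+1` elements. -/
def GradedRank (S : Set α) (d : ℕ) : Prop :=
  ∀ c : Finset α, IsMaxChainIn S c → c.card = d + 1

/-- A finite poset is lower Eulerian with rank function `ρ` on intervals: every interval
`[x,y]` is graded of rank `ρ x y` with `μ(x,y) = (-1)^{ρ x y}` (a minimum element is
required separately, via `OrderBot`). -/
def LowerEulerianWith (α : Type*) [PartialOrder α] [Finite α] (ρ : α → α → ℕ) : Prop :=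
  ∀ x y : α, x ≤ y → IntervalGraded x y (ρ x y) ∧ pmu α x y = (-1) ^ ρ x y

instance (α : Type*) [Fintype α] : Fintype (WithTop α) := instFintypeOption
instance (α : Type*) [Fintype α] : Fintype (WithBot α) := instFintypeOption

instance (α : Type*) [Finite α] : Finite (WithTop α) :=
  letI := Fintype.ofFinite α; @Finite.of_fintype (WithTop α) (instFintypeOption (α := α))
instance (α : Type*) [Finite α] : Finite (WithBot α) :=
  letI := Fintype.ofFinite α; @Finite.of_fintype (WithBot α) (instFintypeOption (α := α))

open scoped Classical in
/-- The order complex of the subposet `S`: the collection of finite chains contained in `S`. -/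
noncomputable def chainsIn {α : Type*} [PartialOrder α] [Fintype α] (S : Set α) :
    Finset (Finset α) :=
  Finset.univ.filter fun s => ↑s ⊆ S ∧ IsChain (· ≤ ·) (s : Set α)

/-- The reduced Euler characteristic of a finite simplicial complex
(`χ̃ = Σ_{σ ∈ K} (-1)^{|σ|-1}`, the empty face contributing `-1`). -/
def redEuler {V : Type*} (K : Finset (Finset V)) : ℤ :=
  -∑ s ∈ K, (-1 : ℤ) ^ s.card

/-- The geometric realization of a finite simplicial complex `K`, as the space of convex
weightings supported on faces of `K`, topologized as a subspace of `V → ℝ`. -/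
def realiz {V : Type*} [Fintype V] (K : Finset (Finset V)) : Type _ :=
  {f : V → ℝ // (∃ s ∈ K, ∀ v, f v ≠ 0 → v ∈ s) ∧ (∀ v, 0 ≤ f v) ∧ ∑ v, f v = 1}

instance {V : Type*} [Fintype V] (K : Finset (Finset V)) : TopologicalSpace (realiz K) :=
  instTopologicalSpaceSubtype

section Homology

open Finset

variable (k : Type*) [Field k] {V : Type*} [Fintype V]

/-- An auxiliary linear order on the (finite) vertex set, used to orient simplices. -/
noncomputable def vOrd (V : Type*) [Fintype V] : LinearOrder V :=
  LinearOrder.lift' (Fintype.equivFin V) (Equiv.injective _)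

/-- The position of the vertex `v` in the face `s`, with respect to the auxiliary order. -/
noncomputable def vIdx (s : Finset V) (v : V) : ℕ :=
  letI := vOrd V
  letI := Classical.decEq V
  (s.sort (· ≤ ·)).idxOf v

/-- The space of simplicial `k`-chains on all faces with `n` vertices
(`n = 0` corresponds to the empty face, giving augmented/reduced chains). -/
abbrev ChSp (k : Type*) [Field k] (V : Type*) (n : ℕ) := {s : Finset V // s.card = n} →₀ k

/-- The simplicial boundary map, from chains on faces with `n+1` vertices to chains on
faces with `n` vertices. -/
noncomputable def bdry (n : ℕ) : ChSp k V (n + 1) →ₗ[k] ChSp k V n :=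
  letI := Classical.decEq V
  Finsupp.lsum k fun s =>
    LinearMap.smulRight (LinearMap.id : k →ₗ[k] k)
      (∑ v ∈ s.1.attach,
        ((-1 : k) ^ vIdx s.1 v.1) •
          Finsupp.single ⟨s.1.erase v.1, by
            simp [Finset.card_erase_of_mem v.2, s.2]⟩ (1 : k))

/-- The submodule of chains supported on faces of the complex `K`. -/
def suppIn (K : Finset (Finset V)) (n : ℕ) : Submodule k (ChSp k V n) where
  carrier := {c | ∀ s ∈ c.support, (s : {s : Finset V // s.card = n}).1 ∈ K}
  add_mem' := by
    classical
    intro a b ha hb s hs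
    rcases Finset.mem_union.1 (Finsupp.support_add hs) with h | h
    · exact ha s h
    · exact hb s h
  zero_mem' := by simp
  smul_mem' := by
    classical
    intro t a ha s hs
    exact ha s (Finsupp.support_smul hs)

/-- The reduced cycles of the complex `K` in chain degree `m` (faces with `m` vertices,
i.e. geometric dimension `m-1`). -/
noncomputable def zcyc (K : Finset (Finset V)) : ∀ m : ℕ, Submodule k (ChSp k V m)
  | 0 => suppIn k K 0
  | (n + 1) => suppIn k K (n + 1) ⊓ LinearMap.ker (bdry k n)

/-- The boundaries of the complex `K` in chain degree `m`. -/
noncomputable def zbnd (K : Finset (Finset V)) (m : ℕ) : Submodule k (ChSp k V m) :=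
  Submodule.map (bdry k m) (suppIn k K (m + 1))

/-- Vanishing of the reduced homology `H̃_i(K; k)` (for `i : ℤ`): every reduced `i`-cycle
supported on `K` is the boundary of a chain supported on `K`. -/
noncomputable def HVanish (K : Finset (Finset V)) (i : ℤ) : Prop :=
  if i < -1 then True else zcyc k K (i + 1).toNat ≤ zbnd k K (i + 1).toNat

/-- The dimension of a finite simplicial complex, as an integer (`-1` for the void or
empty complex). -/
def dimC (K : Finset (Finset V)) : ℤ := (↑(K.sup Finset.card) : ℤ) - 1

open scoped Classical in
/-- The link of a face `σ` in the complex `K`. -/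
noncomputable def linkC (K : Finset (Finset V)) (σ : Finset V) : Finset (Finset V) :=
  Finset.univ.filter fun γ => Disjoint γ σ ∧ γ ∪ σ ∈ K

/-- A complex is closed under taking subsets of faces. -/
def DownClosed (K : Finset (Finset V)) : Prop :=
  ∀ s t : Finset V, t ∈ K → s ⊆ t → s ∈ K

/-- `K` is Cohen-Macaulay over `k`: for every face `σ` of `K` (including the empty face),
`H̃_i(link_K σ; k) = 0` for all `i < dim link_K σ`. -/
noncomputable def IsCM (K : Finset (Finset V)) : Prop :=
  ∀ σ ∈ K, ∀ i : ℤ, i < dimC (linkC K σ) → HVanish k (linkC K σ) i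

open scoped Classical in
/-- The deletion of a set `U` of vertices from `K`: all faces disjoint from `U`. -/
noncomputable def delV (K : Finset (Finset V)) (U : Finset V) : Finset (Finset V) :=
  K.filter fun σ => Disjoint σ U

/-- `K` is doubly Cohen-Macaulay over `k`: it is Cohen-Macaulay and deleting any vertex
leaves a Cohen-Macaulay complex of the same dimension. -/
noncomputable def Is2CM (K : Finset (Finset V)) : Prop :=
  IsCM k K ∧ ∀ v : V, {v} ∈ K → IsCM k (delV K {v}) ∧ dimC (delV K {v}) = dimC K

/-- `s` is a facet (maximal face) of `K`. -/
def IsFacet (K : Finset (Finset V)) (s : Finset V) : Prop :=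
  s ∈ K ∧ ∀ t ∈ K, s ⊆ t → s = t

/-- `K` is pure: all facets have `m` vertices. -/
def PureCard (K : Finset (Finset V)) (m : ℕ) : Prop :=
  ∀ s : Finset V, IsFacet K s → s.card = m

end Homology


/-!
A chain `b` on `Δ` whose faces meet `U` at most once splits as `b₀ + Σ_{u ∈ U} u * b_u`,
with `b₀` avoiding `U` and `b_u` a chain on `link u`. Since `∂(u * b_u) = b_u - u * ∂b_u`,
if `∂b` avoids `U` then every `b_u` is a cycle and `∂b = ∂b₀ + Σ b_u`. So a cycle of `Δ \ U`
that bounds in `Δ` also bounds in `Δ \ U` once the cycles `b_u` bound in `link u ⊆ Δ \ U`;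
applied to the links of the faces of `Δ \ U`, this makes `Δ \ U` Cohen-Macaulay.

For `(Δ \ U) \ v`, a cycle `c = ∂b` with `b` on `Δ \ U` is split along `{v}` as `∂b₀ + e`,
where `e` is a cycle of `link v` avoiding `U`. Writing `e = ∂q` in `link v` and splitting `q`
along `U` expresses `e` by cycles of `(link u) \ v`, which bound there because `link u` is
doubly Cohen-Macaulay. The dimension counts use that Cohen-Macaulay complexes are pure, which
follows by induction on the dimension: `H̃₀ = 0` makes the 1-skeleton connected, and facets
through the two ends of an edge have the same size.
-/


section Orientation

theorem List.idxOf_eq_countP_lt {W : Type*} [LinearOrder W] [DecidableEq W] {l : List W}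
    (hl : l.Pairwise (· < ·)) {x : W} (hx : x ∈ l) :
    l.idxOf x = l.countP (fun b => decide (b < x)) := by
  induction l with
  | nil => simp at hx
  | cons a t ih =>
    obtain ⟨hat, ht⟩ := List.pairwise_cons.1 hl
    rcases List.mem_cons.1 hx with rfl | hxt
    · rw [List.idxOf_cons_self, List.countP_cons,
        List.countP_eq_zero.2 fun b hb => by simpa using (hat b hb).le]
      simp
    · have hax : a < x := hat x hxt
      simp [List.idxOf_cons_ne _ hax.ne, ih ht hxt, hax]

variable {V : Type*} [Fintype V]

attribute [local instance] vOrd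

theorem vIdx_eq_card_filter_lt (s : Finset V) {x : V} (hx : x ∈ s) :
    vIdx s x = #{z ∈ s | z < x} := by
  unfold vIdx
  rw [@List.idxOf_eq_countP_lt _ _ (Classical.decEq V) _ (Finset.sortedLT_sort s).pairwise _
      ((mem_sort _).2 hx),
    (Finset.sort_perm_toList _ _).countP_eq, ← Multiset.coe_countP, Finset.coe_toList,
    Multiset.countP_eq_card_filter]
  rfl

theorem vIdx_singleton (x : V) : vIdx {x} x = 0 := by
  simp [vIdx_eq_card_filter_lt _ (mem_singleton_self x)]

variable [DecidableEq V]

theorem vIdx_eq_vIdx_erase_add {s : Finset V} {x y : V} (hx : x ∈ s) (hxy : x ≠ y) :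
    vIdx s x = vIdx (s.erase y) x + if y < x ∧ y ∈ s then 1 else 0 := by
  rw [vIdx_eq_card_filter_lt s hx, vIdx_eq_card_filter_lt _ (mem_erase.2 ⟨hxy, hx⟩),
    filter_erase, card_erase_eq_ite]
  by_cases h : y < x ∧ y ∈ s
  · have hy : y ∈ s.filter (· < x) := mem_filter.2 ⟨h.2, h.1⟩
    rw [if_pos hy, if_pos h, Nat.sub_add_cancel (card_pos.2 ⟨y, hy⟩)]
  · rw [if_neg (by simpa [and_comm] using h), if_neg h, add_zero]

theorem vIdx_pair_add_vIdx_pair {x y : V} (hxy : x ≠ y) :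
    vIdx {x, y} x + vIdx {x, y} y = 1 := by
  rw [vIdx_eq_vIdx_erase_add (mem_insert_self x {y}) hxy,
    vIdx_eq_vIdx_erase_add (mem_insert_of_mem (mem_singleton_self y)) hxy.symm,
    erase_insert (notMem_singleton.2 hxy), pair_comm, erase_insert (notMem_singleton.2 hxy.symm),
    vIdx_singleton, vIdx_singleton]
  rcases lt_or_gt_of_ne hxy with h | h <;> simp [h, h.not_gt]

variable {R : Type*} [Ring R]

theorem neg_one_pow_mul_neg_one_pow_self (n : ℕ) : (-1 : R) ^ n * (-1) ^ n = 1 := by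
  rw [← pow_add, ← two_mul, pow_mul]
  simp

theorem neg_one_pow_mul_neg_one_pow_mul (n : ℕ) (a : R) : (-1 : R) ^ n * ((-1) ^ n * a) = a := by
  rw [← mul_assoc, neg_one_pow_mul_neg_one_pow_self, one_mul]

theorem neg_one_pow_add_neg_one_pow_eq_zero {m n : ℕ} (h : m + n = 1) :
    (-1 : R) ^ m + (-1) ^ n = 0 := by
  obtain ⟨rfl, rfl⟩ | ⟨rfl, rfl⟩ : (m = 0 ∧ n = 1) ∨ (m = 1 ∧ n = 0) := by omega
  all_goals simp

theorem neg_one_pow_vIdx_mul_swap {s : Finset V} {x y : V} (hx : x ∈ s)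
    (hy : y ∈ s) (hxy : x ≠ y) :
    (-1 : R) ^ vIdx s x * (-1) ^ vIdx s y
      = -((-1) ^ vIdx (s.erase y) x * (-1) ^ vIdx (s.erase x) y) := by
  rw [vIdx_eq_vIdx_erase_add hx hxy, vIdx_eq_vIdx_erase_add hy hxy.symm]
  rcases lt_or_gt_of_ne hxy with h | h <;> simp [h, h.not_gt, hx, hy, pow_add]

end Orientation

section Chains

variable {k : Type*} [Field k] {V : Type*} {n : ℕ}

theorem apply_congr_face (e : ChSp k V n) {s t : {s : Finset V // s.card = n}} (h : s.1 = t.1) :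
    e s = e t :=
  congrArg e (Subtype.ext h)

open scoped Classical

variable [Fintype V]

attribute [local instance] vOrd

noncomputable local instance (priority := high) : DecidableEq V := Classical.decEq V

noncomputable def insertFace (t : {s : Finset V // s.card = n}) (x : V) (hx : x ∉ t.1) :
    {s : Finset V // s.card = n + 1} :=
  ⟨insert x t.1, by rw [card_insert_of_notMem hx, t.2]⟩

noncomputable def eraseFace (t : {s : Finset V // s.card = n + 1}) (x : V) (hx : x ∈ t.1) :
    {s : Finset V // s.card = n} :=
  ⟨t.1.erase x, by rw [card_erase_of_mem hx, t.2, Nat.add_sub_cancel]⟩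

theorem bdry_single_apply (s : {s : Finset V // s.card = n + 1}) (a : k)
    (t : {s : Finset V // s.card = n}) :
    bdry k n (Finsupp.single s a) t = ∑ y : V, if h : y ∈ t.1 then 0 else
      (-1 : k) ^ vIdx (insert y t.1) y * Finsupp.single s a (insertFace t y h) := by
  simp only [bdry, Finsupp.lsum_single, LinearMap.smulRight_apply, LinearMap.id_apply,
    Finsupp.smul_apply, Finsupp.finsetSum_apply, Finsupp.single_apply, smul_eq_mul,
    Subtype.ext_iff, insertFace, Finset.mul_sum,
    sum_attach s.1 fun y => (-1 : k) ^ vIdx s.1 y * if s.1.erase y = t.1 then 1 else 0]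
  rw [← Finset.sum_subset (subset_univ s.1)]
  · refine sum_congr rfl fun y hy => ?_
    by_cases h : s.1.erase y = t.1
    · have hyt : y ∉ t.1 := h ▸ notMem_erase y _
      rw [if_pos h, dif_neg hyt, if_pos (by rw [← h, insert_erase hy]), ← h, insert_erase hy,
        mul_one, mul_comm]
    · rw [if_neg h, mul_zero, mul_zero]
      by_cases hyt : y ∈ t.1
      · rw [dif_pos hyt]
      · rw [dif_neg hyt, if_neg (fun hs => h (by rw [hs, erase_insert hyt])), mul_zero]
  · intro y _ hy
    by_cases hyt : y ∈ t.1
    · rw [dif_pos hyt]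
    · rw [dif_neg hyt, if_neg fun hs : s.1 = insert y t.1 => hy (hs ▸ mem_insert_self y _),
        mul_zero]

theorem bdry_apply (c : ChSp k V (n + 1)) (t : {s : Finset V // s.card = n}) :
    bdry k n c t = ∑ y : V, if h : y ∈ t.1 then 0 else
      (-1 : k) ^ vIdx (insert y t.1) y * c (insertFace t y h) := by
  induction c using Finsupp.induction with
  | zero => simp
  | single_add s a c _ _ ih =>
    rw [map_add, Finsupp.add_apply, ih, bdry_single_apply, ← sum_add_distrib]
    refine sum_congr rfl fun y _ => ?_
    by_cases hyt : y ∈ t.1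
    · simp [hyt]
    · simp only [dif_neg hyt, Finsupp.add_apply, mul_add]

noncomputable def coneC (x : V) (e : ChSp k V n) : ChSp k V (n + 1) :=
  Finsupp.equivFunOnFinite.symm fun s =>
    if hx : x ∈ s.1 then (-1 : k) ^ vIdx s.1 x * e (eraseFace s x hx) else 0

noncomputable def linkPartC (x : V) (c : ChSp k V (n + 1)) : ChSp k V n :=
  Finsupp.equivFunOnFinite.symm fun t =>
    if hx : x ∈ t.1 then 0 else (-1 : k) ^ vIdx (insert x t.1) x * c (insertFace t x hx)

noncomputable def restrictC (P : Finset V → Prop) (c : ChSp k V n) : ChSp k V n :=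
  Finsupp.equivFunOnFinite.symm fun s => if P s.1 then c s else 0

theorem coneC_apply_of_mem {x : V} (e : ChSp k V n) {s} (hx : x ∈ s.1) :
    coneC x e s = (-1 : k) ^ vIdx s.1 x * e (eraseFace s x hx) :=
  dif_pos hx

theorem coneC_apply_of_notMem {x : V} (e : ChSp k V n) {s} (hx : x ∉ s.1) : coneC x e s = 0 :=
  dif_neg hx

theorem coneC_apply_insertFace {x : V} (e : ChSp k V n) {t} (hx : x ∉ t.1) :
    coneC x e (insertFace t x hx) = (-1 : k) ^ vIdx (insert x t.1) x * e t := by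
  rw [coneC_apply_of_mem e (mem_insert_self x t.1)]
  exact congrArg _ (apply_congr_face e (erase_insert hx))

@[simp] theorem coneC_zero (x : V) : coneC x (0 : ChSp k V n) = 0 := by
  ext s
  by_cases hx : x ∈ s.1
  · simp [coneC_apply_of_mem _ hx]
  · simp [coneC_apply_of_notMem _ hx]

theorem linkPartC_apply_of_notMem {x : V} (c : ChSp k V (n + 1)) {t} (hx : x ∉ t.1) :
    linkPartC x c t = (-1 : k) ^ vIdx (insert x t.1) x * c (insertFace t x hx) :=
  dif_neg hx

theorem linkPartC_apply_of_mem {x : V} (c : ChSp k V (n + 1)) {t} (hx : x ∈ t.1) :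
    linkPartC x c t = 0 :=
  dif_pos hx

theorem restrictC_apply (P : Finset V → Prop) (c : ChSp k V n) (s) :
    restrictC P c s = if P s.1 then c s else 0 :=
  rfl

theorem coneC_linkPartC_apply (x : V) (c : ChSp k V (n + 1)) (s) :
    coneC x (linkPartC x c) s = if x ∈ s.1 then c s else 0 := by
  by_cases hx : x ∈ s.1
  · have hx' : x ∉ (eraseFace s x hx).1 := notMem_erase x s.1
    have hs : insert x (eraseFace s x hx).1 = s.1 := insert_erase hx
    rw [if_pos hx, coneC_apply_of_mem _ hx, linkPartC_apply_of_notMem _ hx', hs,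
      apply_congr_face c hs, neg_one_pow_mul_neg_one_pow_mul]
  · rw [if_neg hx, coneC_apply_of_notMem _ hx]

theorem bdry_coneC_apply_of_notMem {x : V} (e : ChSp k V n) {t} (hxt : x ∉ t.1) :
    bdry k n (coneC x e) t = e t := by
  rw [bdry_apply, sum_eq_single x, dif_neg hxt, coneC_apply_insertFace,
    neg_one_pow_mul_neg_one_pow_mul]
  · intro y _ hyx
    by_cases hyt : y ∈ t.1
    · rw [dif_pos hyt]
    · rw [dif_neg hyt, coneC_apply_of_notMem, mul_zero]
      simp [insertFace, Ne.symm hyx, hxt]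
  · simp

theorem bdry_coneC {x : V} (e : ChSp k V (n + 1)) (hfree : ∀ s, e s ≠ 0 → x ∉ s.1) :
    bdry k (n + 1) (coneC x e) = e - coneC x (bdry k n e) := by
  ext t
  rw [Finsupp.sub_apply]
  by_cases hxt : x ∈ t.1
  · have het : e t = 0 := by_contra fun h => hfree t h hxt
    rw [het, zero_sub, coneC_apply_of_mem _ hxt, bdry_apply, bdry_apply, mul_sum,
      ← sum_neg_distrib]
    refine sum_congr rfl fun y _ => ?_
    by_cases hyt : y ∈ t.1
    · by_cases hyx : y = x
      · subst hyx
        rw [dif_pos hyt, dif_neg (show y ∉ (eraseFace t y hyt).1 from notMem_erase y t.1),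
          apply_congr_face e (insert_erase hyt), het, mul_zero, mul_zero, neg_zero]
      · have hy : y ∈ (eraseFace t x hxt).1 := mem_erase.2 ⟨hyx, hyt⟩
        rw [dif_pos hyt, dif_pos hy, mul_zero, neg_zero]
    · have hyx : y ≠ x := fun h => hyt (h ▸ hxt)
      have hyer : y ∉ (eraseFace t x hxt).1 := fun h => hyt (mem_of_mem_erase h)
      have hswap : (insert y t.1).erase x = insert y (t.1.erase x) := erase_insert_of_ne hyx
      have hsign := neg_one_pow_vIdx_mul_swap (R := k) (mem_insert_self y t.1)
        (mem_insert_of_mem hxt) hyx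
      rw [hswap, erase_insert hyt] at hsign
      rw [dif_neg hyt, dif_neg hyer, coneC_apply_of_mem _ (mem_insert_of_mem hxt),
        apply_congr_face e (t := insertFace (eraseFace t x hxt) y hyer) hswap]
      simp only [insertFace, eraseFace, ← mul_assoc, hsign]
      ring
  · rw [coneC_apply_of_notMem _ hxt, sub_zero, bdry_coneC_apply_of_notMem e hxt]

theorem bdry_coneC_zero (x : V) (e : ChSp k V 0) : bdry k 0 (coneC x e) = e :=
  Finsupp.ext fun t => bdry_coneC_apply_of_notMem e (by simp [card_eq_zero.1 t.2])

end Chains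

section Complexes

open scoped Classical

variable {V : Type*} {K L : Finset (Finset V)} {U σ τ s γ : Finset V} {d : ℕ}

@[simp] theorem mem_delV : s ∈ delV K U ↔ s ∈ K ∧ Disjoint s U := by
  simp [delV]

theorem delV_subset (K : Finset (Finset V)) (U : Finset V) : delV K U ⊆ K :=
  fun _ hs => (mem_delV.1 hs).1

theorem delV_mono (h : K ⊆ L) (U : Finset V) : delV K U ⊆ delV L U :=
  fun _ hs => mem_delV.2 ⟨h (mem_delV.1 hs).1, (mem_delV.1 hs).2⟩

theorem downClosed_delV (hK : DownClosed K) (U : Finset V) : DownClosed (delV K U) := by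
  intro s t ht hst
  rw [mem_delV] at ht ⊢
  exact ⟨hK s t ht.1 hst, disjoint_of_subset_left hst ht.2⟩

theorem DownClosed.delV_singleton_eq_self (hK : DownClosed K) {v : V} (hv : {v} ∉ K) :
    delV K {v} = K := by
  ext γ
  refine ⟨fun h => (mem_delV.1 h).1, fun h => mem_delV.2 ⟨h, ?_⟩⟩
  exact disjoint_singleton_right.2 fun hvγ => hv (hK _ γ h (singleton_subset_iff.2 hvγ))

theorem exists_isFacet_superset (hs : s ∈ K) : ∃ F, IsFacet K F ∧ s ⊆ F := by
  obtain ⟨F, hF, hmax⟩ :=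
    exists_maximal (s := {t ∈ K | s ⊆ t}) ⟨s, mem_filter.2 ⟨hs, subset_refl s⟩⟩
  obtain ⟨hFK, hsF⟩ := mem_filter.1 hF
  exact ⟨F, ⟨hFK, fun t ht hFt =>
    le_antisymm hFt (hmax (mem_filter.2 ⟨ht, hsF.trans hFt⟩) hFt)⟩, hsF⟩

theorem isFacet_of_card_eq_sup (hs : s ∈ K) (hcard : #s = K.sup card) :
    IsFacet K s :=
  ⟨hs, fun _ ht hst => eq_of_subset_of_card_le hst (hcard ▸ le_sup ht)⟩

theorem PureCard.card_le (hpure : PureCard K d) (hs : s ∈ K) : #s ≤ d := by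
  obtain ⟨F, hF, hsF⟩ := exists_isFacet_superset hs
  exact hpure F hF ▸ card_le_card hsF

theorem dimC_mono (h : K ⊆ L) : dimC K ≤ dimC L := by
  unfold dimC
  have := sup_mono (f := card) h
  omega

theorem dimC_le_of_card_le {m : ℕ} (h : ∀ s ∈ K, #s ≤ m) : dimC K ≤ m - 1 := by
  unfold dimC
  have := Finset.sup_le h
  omega

theorem PureCard.dimC_eq (hpure : PureCard K d) (hne : K.Nonempty) : dimC K = d - 1 := by
  obtain ⟨s, hs⟩ := hne
  obtain ⟨F, hF, -⟩ := exists_isFacet_superset hs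
  rw [dimC, le_antisymm (Finset.sup_le fun _ ht => hpure.card_le ht) (hpure F hF ▸ le_sup hF.1)]

theorem DownClosed.exists_singleton_mem (hK : DownClosed K) (h : -1 < dimC K) :
    ∃ x, {x} ∈ K := by
  obtain ⟨s, hs, hcard⟩ := exists_mem_eq_sup K
    (nonempty_iff_ne_empty.2 fun h0 => by simp [dimC, h0] at h) card
  obtain ⟨x, hx⟩ : s.Nonempty := card_pos.1 (by unfold dimC at h; omega)
  exact ⟨x, hK _ s hs (singleton_subset_iff.2 hx)⟩

def FacetTransversal (K : Finset (Finset V)) (U : Finset V) : Prop :=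
  ∀ s, IsFacet K s → #(s ∩ U) = 1

theorem FacetTransversal.card_inter_le_one (hU : FacetTransversal K U) :
    ∀ s ∈ K, #(s ∩ U) ≤ 1 := fun s hs => by
  obtain ⟨F, hF, hsF⟩ := exists_isFacet_superset hs
  exact hU F hF ▸ card_le_card (inter_subset_inter_right hsF)

theorem PureCard.card_lt_of_disjoint (hpure : PureCard K d)
    (hU : FacetTransversal K U) (hs : s ∈ K) (hsU : Disjoint s U) : #s < d := by
  obtain ⟨F, hF, hsF⟩ := exists_isFacet_superset hs
  obtain ⟨u, hu⟩ := card_eq_one.1 (hU F hF)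
  have huFU : u ∈ F ∩ U := hu ▸ mem_singleton_self u
  have hsub : s ⊆ F.erase u :=
    subset_erase.2 ⟨hsF, fun h => disjoint_left.1 hsU h (mem_inter.1 huFU).2⟩
  have h1 := card_le_card hsub
  have h2 := card_pos.2 ⟨u, (mem_inter.1 huFU).1⟩
  rw [card_erase_of_mem (mem_inter.1 huFU).1] at h1
  have := hpure F hF
  omega

theorem PureCard.dimC_delV_le (hpure : PureCard K d) (hU : FacetTransversal K U) :
    dimC (delV K U) ≤ ((d - 1 : ℕ) : ℤ) - 1 :=
  dimC_le_of_card_le fun s hs => by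
    have := hpure.card_lt_of_disjoint hU (mem_delV.1 hs).1 (mem_delV.1 hs).2
    omega

variable [Fintype V]

@[simp] theorem mem_linkC : γ ∈ linkC K σ ↔ Disjoint γ σ ∧ γ ∪ σ ∈ K := by
  simp [linkC]

@[simp] theorem linkC_empty (K : Finset (Finset V)) : linkC K ∅ = K := by
  ext γ
  simp

theorem downClosed_linkC (hK : DownClosed K) (σ : Finset V) : DownClosed (linkC K σ) := by
  intro s t ht hst
  rw [mem_linkC] at ht ⊢
  exact ⟨disjoint_of_subset_left hst ht.1, hK _ _ ht.2 (union_subset_union_left hst)⟩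

theorem linkC_linkC (h : Disjoint τ σ) : linkC (linkC K σ) τ = linkC K (σ ∪ τ) := by
  ext γ
  simp only [mem_linkC, disjoint_union_left, disjoint_union_right, union_assoc, union_comm τ σ,
    h]
  tauto

theorem linkC_comm (K : Finset (Finset V)) (σ τ : Finset V) :
    linkC (linkC K σ) τ = linkC (linkC K τ) σ := by
  ext γ
  simp only [mem_linkC, disjoint_union_left, union_right_comm γ τ σ]
  tauto

theorem delV_linkC (h : Disjoint σ U) : delV (linkC K σ) U = linkC (delV K U) σ := by
  ext γ
  simp only [mem_delV, mem_linkC, disjoint_union_left]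
  tauto

theorem DownClosed.linkC_subset_delV (hK : DownClosed K) (σ : Finset V) :
    linkC K σ ⊆ delV K σ := fun γ hγ =>
  mem_delV.2 ⟨hK γ _ (mem_linkC.1 hγ).2 subset_union_left, (mem_linkC.1 hγ).1⟩

theorem empty_mem_linkC (hσ : σ ∈ K) : ∅ ∈ linkC K σ := by
  simpa using hσ

theorem DownClosed.linkC_eq_empty (hK : DownClosed K) (hσ : σ ∉ K) : linkC K σ = ∅ :=
  eq_empty_of_forall_notMem fun _ hγ =>
    hσ (hK σ _ (mem_linkC.1 hγ).2 subset_union_right)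

theorem card_inter_le_one_of_mem_linkC (hLU : ∀ s ∈ L, #(s ∩ U) ≤ 1)
    (hγ : γ ∈ linkC L σ) : #(γ ∩ U) ≤ 1 :=
  (card_le_card (inter_subset_inter_right subset_union_left)).trans
    (hLU _ (mem_linkC.1 hγ).2)

theorem DownClosed.linkC_subset_delV_of_mem (hL : DownClosed L)
    (hLU : ∀ s ∈ L, #(s ∩ U) ≤ 1) {u : V} (hu : u ∈ U) : linkC L {u} ⊆ delV L U := by
  intro γ hγ
  obtain ⟨hγu, hγL⟩ := mem_linkC.1 hγ
  refine mem_delV.2 ⟨hL γ _ hγL subset_union_left, disjoint_left.2 fun w hwγ hwU => ?_⟩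
  have hwu : w = u := card_le_one.1 (hLU _ hγL) w (by simp [hwγ, hwU]) u (by simp [hu])
  exact disjoint_left.1 hγu hwγ (mem_singleton.2 hwu)

theorem delV_linkC_subset_delV_delV (hL : DownClosed L) (U : Finset V) (w : V) :
    delV (linkC L {w}) U ⊆ delV (delV L U) {w} := fun γ hγ => by
  obtain ⟨⟨hγw, hγL⟩, hγU⟩ := by simpa only [mem_delV, mem_linkC] using hγ
  simpa [hγw, hγU] using hL γ _ hγL subset_union_left

theorem isFacet_union_of_isFacet_linkC {G : Finset V} (hG : IsFacet (linkC K σ) G) :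
    IsFacet K (G ∪ σ) := by
  obtain ⟨hGσ, hGK⟩ := mem_linkC.1 hG.1
  refine ⟨hGK, fun t ht hsub => ?_⟩
  have hσt : σ ⊆ t := subset_union_right.trans hsub
  have hGt : G ⊆ t \ σ := fun w hw =>
    mem_sdiff.2 ⟨hsub (mem_union_left _ hw), disjoint_left.1 hGσ hw⟩
  rw [hG.2 (t \ σ) (mem_linkC.2 ⟨sdiff_disjoint, by rwa [sdiff_union_of_subset hσt]⟩) hGt,
    sdiff_union_of_subset hσt]

theorem PureCard.linkC (hpure : PureCard K d) (σ : Finset V) :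
    PureCard (linkC K σ) (d - #σ) := by
  intro G hG
  have h := hpure _ (isFacet_union_of_isFacet_linkC hG)
  rw [card_union_of_disjoint (mem_linkC.1 hG.1).1] at h
  omega

theorem FacetTransversal.linkC (hU : FacetTransversal K U) (hσU : Disjoint σ U) :
    FacetTransversal (linkC K σ) U := fun G hG => by
  have h := hU _ (isFacet_union_of_isFacet_linkC hG)
  rwa [union_inter_distrib_right, disjoint_iff_inter_eq_empty.1 hσU, union_empty] at h

theorem isFacet_linkC_erase {F : Finset V} (hF : IsFacet K F) {x : V} (hx : x ∈ F) :
    IsFacet (linkC K {x}) (F.erase x) := by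
  have hins : ∀ t : Finset V, t ∪ {x} = insert x t := fun t => by rw [union_comm, ← insert_eq]
  refine ⟨mem_linkC.2 ⟨by simp, by rw [hins, insert_erase hx]; exact hF.1⟩,
    fun t ht hsub => ?_⟩
  obtain ⟨htx, htK⟩ := mem_linkC.1 ht
  rw [hF.2 _ htK (by rw [hins, ← insert_erase hx]; exact insert_subset_insert x hsub), hins,
    erase_insert (disjoint_singleton_right.1 htx)]

theorem sup_card_linkC_singleton_lt (hK : 0 < K.sup card) (x : V) :
    (linkC K {x}).sup card < K.sup card := by
  refine lt_of_le_of_lt (Finset.sup_le fun γ hγ => ?_) (Nat.sub_lt hK one_pos)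
  obtain ⟨hγx, hγK⟩ := mem_linkC.1 hγ
  have := le_sup (f := card) hγK
  rw [card_union_of_disjoint hγx, card_singleton] at this
  omega

end Complexes

section Cones

open scoped Classical

variable {k : Type*} [Field k] {V : Type*} {K L : Finset (Finset V)} {U : Finset V} {n : ℕ}

theorem mem_suppIn_iff {c : ChSp k V n} : c ∈ suppIn k K n ↔ ∀ s, c s ≠ 0 → s.1 ∈ K :=
  forall_congr' fun _ => by rw [Finsupp.mem_support_iff]

theorem apply_eq_zero_of_mem_suppIn {c : ChSp k V n} (hc : c ∈ suppIn k K n) {s}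
    (hs : s.1 ∉ K) : c s = 0 :=
  by_contra fun h => hs (mem_suppIn_iff.1 hc s h)

theorem suppIn_mono (h : K ⊆ L) (n : ℕ) : suppIn k K n ≤ suppIn k L n :=
  fun _ hc => mem_suppIn_iff.2 fun s hs => h (mem_suppIn_iff.1 hc s hs)

theorem single_mem_suppIn {n : ℕ} {s : {s : Finset V // s.card = n}} (hs : s.1 ∈ K) (a : k) :
    Finsupp.single s a ∈ suppIn k K n := by
  refine mem_suppIn_iff.2 fun t ht => ?_
  rw [Finsupp.single_apply] at ht
  split_ifs at ht with h
  · exact h ▸ hs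
  · exact absurd rfl ht

variable [Fintype V]

attribute [local instance] vOrd

noncomputable local instance (priority := high) : DecidableEq V := Classical.decEq V

theorem bdry_mem_suppIn (hK : DownClosed K) {c : ChSp k V (n + 1)}
    (hc : c ∈ suppIn k K (n + 1)) : bdry k n c ∈ suppIn k K n := by
  refine mem_suppIn_iff.2 fun t ht => ?_
  rw [bdry_apply] at ht
  obtain ⟨y, -, hy⟩ := exists_ne_zero_of_sum_ne_zero ht
  by_cases hyt : y ∈ t.1
  · exact absurd (dif_pos hyt) hy
  · rw [dif_neg hyt] at hy
    exact hK t.1 _ (mem_suppIn_iff.1 hc _ (right_ne_zero_of_mul hy)) (subset_insert y t.1)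

theorem coneC_mem_suppIn {x : V} {a : ChSp k V n} (ha : a ∈ suppIn k (linkC K {x}) n) :
    coneC x a ∈ suppIn k K (n + 1) := by
  refine mem_suppIn_iff.2 fun s hs => ?_
  by_cases hx : x ∈ s.1
  · rw [coneC_apply_of_mem _ hx] at hs
    have h := (mem_linkC.1 (mem_suppIn_iff.1 ha _ (right_ne_zero_of_mul hs))).2
    rwa [eraseFace, union_comm, ← insert_eq, insert_erase hx] at h
  · exact absurd (coneC_apply_of_notMem _ hx) hs

theorem linkPartC_mem_suppIn {x : V} {c : ChSp k V (n + 1)} (hc : c ∈ suppIn k K (n + 1)) :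
    linkPartC x c ∈ suppIn k (linkC K {x}) n := by
  refine mem_suppIn_iff.2 fun t ht => ?_
  by_cases hx : x ∈ t.1
  · exact absurd (linkPartC_apply_of_mem _ hx) ht
  · rw [linkPartC_apply_of_notMem _ hx] at ht
    have h := mem_suppIn_iff.1 hc _ (right_ne_zero_of_mul ht)
    rw [mem_linkC, union_comm, ← insert_eq]
    exact ⟨disjoint_singleton_right.2 hx, h⟩

theorem restrictC_mem_suppIn_delV {c : ChSp k V n} (hc : c ∈ suppIn k K n) :
    restrictC (Disjoint · U) c ∈ suppIn k (delV K U) n := by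
  refine mem_suppIn_iff.2 fun s hs => ?_
  rw [restrictC_apply] at hs
  split_ifs at hs with hd
  · exact mem_delV.2 ⟨mem_suppIn_iff.1 hc s hs, hd⟩
  · exact absurd rfl hs

theorem eq_restrictC_add_sum_coneC_linkPartC (hLU : ∀ s ∈ L, #(s ∩ U) ≤ 1)
    {c : ChSp k V (n + 1)} (hc : c ∈ suppIn k L (n + 1)) :
    c = restrictC (Disjoint · U) c + ∑ u ∈ U, coneC u (linkPartC u c) := by
  ext s
  simp only [Finsupp.add_apply, Finsupp.finsetSum_apply, coneC_linkPartC_apply, restrictC_apply,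
    sum_ite, sum_const_zero, add_zero, sum_const, filter_mem_eq_inter, inter_comm U]
  by_cases hcs : c s = 0
  · simp [hcs]
  by_cases hd : Disjoint s.1 U
  · simp [hd, disjoint_iff_inter_eq_empty.1 hd]
  · have h1 : #(s.1 ∩ U) = 1 :=
      le_antisymm (hLU _ (mem_suppIn_iff.1 hc s hcs))
        (card_pos.2 (not_disjoint_iff_nonempty_inter.1 hd))
    simp [hd, h1]

theorem sum_coneC_apply_insertFace {u : V} (hu : u ∈ U) (F : V → ChSp k V n)
    {γ : {s : Finset V // s.card = n}} (hγ : Disjoint γ.1 U) :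
    (∑ u' ∈ U, coneC u' (F u')) (insertFace γ u (disjoint_right.1 hγ hu))
      = (-1 : k) ^ vIdx (insert u γ.1) u * F u γ := by
  rw [Finsupp.finsetSum_apply, sum_eq_single_of_mem u hu, coneC_apply_insertFace]
  intro u' hu' hne
  exact coneC_apply_of_notMem _ fun h => (mem_insert.1 h).elim hne (disjoint_right.1 hγ hu')

theorem bdry_eq_bdry_restrictC_add_sum (hLU : ∀ s ∈ L, #(s ∩ U) ≤ 1) {b : ChSp k V (n + 2)}
    (hb : b ∈ suppIn k L (n + 2)) :
    bdry k (n + 1) b = bdry k (n + 1) (restrictC (Disjoint · U) b)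
      + ∑ u ∈ U, (linkPartC u b - coneC u (bdry k n (linkPartC u b))) := by
  conv_lhs => rw [eq_restrictC_add_sum_coneC_linkPartC hLU hb, map_add, map_sum]
  congr 1
  refine sum_congr rfl fun u _ => bdry_coneC _ fun s hs hu => hs ?_
  exact linkPartC_apply_of_mem _ hu

/-- On a face `γ ∪ {u}` with `γ` disjoint from `U`, the only term of the decomposition of `∂b`
that does not vanish is `-(u * ∂(linkPartC u b))`. -/
theorem bdry_linkPartC_eq_zero (hL : DownClosed L) (hLU : ∀ s ∈ L, #(s ∩ U) ≤ 1)
    {b : ChSp k V (n + 2)} (hb : b ∈ suppIn k L (n + 2))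
    (hbd : bdry k (n + 1) b ∈ suppIn k (delV L U) (n + 1)) {u : V} (hu : u ∈ U) :
    bdry k n (linkPartC u b) = 0 := by
  have hD : ∀ u ∈ U, linkPartC u b ∈ suppIn k (delV L U) (n + 1) := fun u hu =>
    suppIn_mono (hL.linkC_subset_delV_of_mem hLU hu) _ (linkPartC_mem_suppIn hb)
  ext γ
  by_cases hγ : Disjoint γ.1 U
  · have hout : (insertFace γ u (disjoint_right.1 hγ hu)).1 ∉ delV L U := by
      simp [insertFace, hu]
    have h := congrArg (· (insertFace γ u (disjoint_right.1 hγ hu)))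
      (bdry_eq_bdry_restrictC_add_sum hLU hb)
    simp only [Finsupp.add_apply, sum_sub_distrib, Finsupp.sub_apply] at h
    rw [sum_coneC_apply_insertFace hu _ hγ, apply_eq_zero_of_mem_suppIn hbd hout,
      apply_eq_zero_of_mem_suppIn
        (bdry_mem_suppIn (downClosed_delV hL U) (restrictC_mem_suppIn_delV hb)) hout,
      Finsupp.finsetSum_apply,
      sum_eq_zero fun u' hu' => apply_eq_zero_of_mem_suppIn (hD u' hu') hout] at h
    simpa using h
  · exact apply_eq_zero_of_mem_suppIn (bdry_mem_suppIn (downClosed_delV hL U) (hD u hu))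
      (by simp [hγ])

theorem bdry_eq_bdry_restrictC_add_sum_linkPartC (hL : DownClosed L)
    (hLU : ∀ s ∈ L, #(s ∩ U) ≤ 1) {b : ChSp k V (n + 2)} (hb : b ∈ suppIn k L (n + 2))
    (hbd : bdry k (n + 1) b ∈ suppIn k (delV L U) (n + 1)) :
    bdry k (n + 1) b
      = bdry k (n + 1) (restrictC (Disjoint · U) b) + ∑ u ∈ U, linkPartC u b := by
  rw [bdry_eq_bdry_restrictC_add_sum hLU hb]
  congr 1
  refine sum_congr rfl fun u hu => ?_
  rw [bdry_linkPartC_eq_zero hL hLU hb hbd hu, coneC_zero, sub_zero]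

end Cones

section Vanishing

open scoped Classical

variable {k : Type*} [Field k] {V : Type*} [Fintype V] {K L : Finset (Finset V)} {U : Finset V}

theorem mem_zcyc_succ {n : ℕ} {c : ChSp k V (n + 1)} :
    c ∈ zcyc k K (n + 1) ↔ c ∈ suppIn k K (n + 1) ∧ bdry k n c = 0 :=
  Submodule.mem_inf

theorem mem_zbnd {m : ℕ} {c : ChSp k V m} :
    c ∈ zbnd k K m ↔ ∃ b ∈ suppIn k K (m + 1), bdry k m b = c :=
  Submodule.mem_map

theorem hVanish_natCast_iff (n : ℕ) :
    HVanish k K n ↔ zcyc k K (n + 1) ≤ zbnd k K (n + 1) := by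
  rw [HVanish, if_neg (by omega)]
  rfl

theorem zcyc_le_suppIn (K : Finset (Finset V)) : ∀ m, zcyc k K m ≤ suppIn k K m
  | 0 => le_rfl
  | _ + 1 => inf_le_left

theorem hVanish_empty (i : ℤ) : HVanish k (∅ : Finset (Finset V)) i := by
  unfold HVanish
  split_ifs
  intro c hc
  have hc0 : c = 0 := Finsupp.ext fun s =>
    apply_eq_zero_of_mem_suppIn (zcyc_le_suppIn _ _ hc) (notMem_empty _)
  exact hc0 ▸ Submodule.zero_mem _

theorem hVanish_neg_one (hK : DownClosed K) (h : -1 < dimC K) : HVanish k K (-1) := by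
  obtain ⟨x, hx⟩ := hK.exists_singleton_mem h
  rw [HVanish, if_neg (by omega)]
  intro c hc
  refine mem_zbnd.2
    ⟨coneC x c, coneC_mem_suppIn (mem_suppIn_iff.2 fun s _ => ?_), bdry_coneC_zero x c⟩
  simpa [card_eq_zero.1 s.2] using hx

theorem hVanish_of_forall_natCast (hK : DownClosed K) {D : ℤ} (hKD : dimC K ≤ D)
    (h : ∀ n : ℕ, (n : ℤ) < D → HVanish k K n) {i : ℤ} (hi : i < dimC K) :
    HVanish k K i := by
  obtain hi1 | rfl | hi0 : i < -1 ∨ i = -1 ∨ 0 ≤ i := by omega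
  · rw [HVanish, if_pos hi1]
    trivial
  · exact hVanish_neg_one hK hi
  · lift i to ℕ using hi0
    exact h i (by omega)

theorem hVanish_delV (hL : DownClosed L) (hLU : ∀ s ∈ L, #(s ∩ U) ≤ 1) (n : ℕ)
    (hLn : HVanish k L n) (hlk : ∀ u ∈ U, HVanish k (linkC L {u}) n) :
    HVanish k (delV L U) n := by
  rw [hVanish_natCast_iff] at hLn ⊢
  intro c hc
  obtain ⟨hcD, hc0⟩ := mem_zcyc_succ.1 hc
  obtain ⟨b, hbL, rfl⟩ :=
    mem_zbnd.1 (hLn (mem_zcyc_succ.2 ⟨suppIn_mono (delV_subset L U) _ hcD, hc0⟩))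
  have hcyc : ∀ u ∈ U,
      ∃ f ∈ suppIn k (linkC L {u}) (n + 2), bdry k (n + 1) f = linkPartC u b := fun u hu =>
    mem_zbnd.1 ((hVanish_natCast_iff n).1 (hlk u hu) (mem_zcyc_succ.2
      ⟨linkPartC_mem_suppIn hbL, bdry_linkPartC_eq_zero hL hLU hbL hcD hu⟩))
  choose! f hf hfb using hcyc
  refine mem_zbnd.2 ⟨restrictC (Disjoint · U) b + ∑ u ∈ U, f u,
    add_mem (restrictC_mem_suppIn_delV hbL)
      (sum_mem fun u hu => suppIn_mono (hL.linkC_subset_delV_of_mem hLU hu) _ (hf u hu)), ?_⟩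
  rw [map_add, map_sum, sum_congr rfl hfb,
    bdry_eq_bdry_restrictC_add_sum_linkPartC hL hLU hbL hcD]

theorem hVanish_delV_delV (hL : DownClosed L) (hLU : ∀ s ∈ L, #(s ∩ U) ≤ 1) {w : V}
    (hw : w ∉ U) (n : ℕ) (hD : HVanish k (delV L U) n) (hlw : HVanish k (linkC L {w}) n)
    (hlu : ∀ u ∈ U, HVanish k (delV (linkC L {u}) {w}) n) :
    HVanish k (delV (delV L U) {w}) n := by
  rw [hVanish_natCast_iff] at hD hlw ⊢
  intro c hc
  obtain ⟨hcM, hc0⟩ := mem_zcyc_succ.1 hc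
  obtain ⟨b, hbD, rfl⟩ :=
    mem_zbnd.1 (hD (mem_zcyc_succ.2 ⟨suppIn_mono (delV_subset _ _) _ hcM, hc0⟩))
  have hDw : ∀ s ∈ delV L U, #(s ∩ {w}) ≤ 1 := fun s _ =>
    (card_le_card inter_subset_right).trans (card_singleton w).le
  have hbw := bdry_eq_bdry_restrictC_add_sum_linkPartC (downClosed_delV hL U) hDw hbD hcM
  rw [sum_singleton] at hbw
  have heU : linkPartC w b ∈ suppIn k (delV (linkC L {w}) U) (n + 1) := by
    rw [delV_linkC (disjoint_singleton_left.2 hw)]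
    exact linkPartC_mem_suppIn hbD
  obtain ⟨q, hqL, hqe⟩ := mem_zbnd.1 (hlw (mem_zcyc_succ.2
    ⟨suppIn_mono (delV_subset _ _) _ heU,
      bdry_linkPartC_eq_zero (downClosed_delV hL U) hDw hbD hcM (mem_singleton_self w)⟩))
  have hLwU : ∀ s ∈ linkC L {w}, #(s ∩ U) ≤ 1 := fun _ hs =>
    card_inter_le_one_of_mem_linkC hLU hs
  have hqd : bdry k (n + 1) q ∈ suppIn k (delV (linkC L {w}) U) (n + 1) := hqe ▸ heU
  have hq := bdry_eq_bdry_restrictC_add_sum_linkPartC (downClosed_linkC hL {w}) hLwU hqL hqd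
  have hlink : ∀ u, linkC (linkC L {w}) {u} ⊆ delV (linkC L {u}) {w} := fun u => by
    rw [linkC_comm]
    exact (downClosed_linkC hL {u}).linkC_subset_delV {w}
  have hcyc : ∀ u ∈ U, ∃ f ∈ suppIn k (delV (linkC L {u}) {w}) (n + 2),
      bdry k (n + 1) f = linkPartC u q := fun u hu =>
    mem_zbnd.1 ((hVanish_natCast_iff n).1 (hlu u hu) (mem_zcyc_succ.2
      ⟨suppIn_mono (hlink u) _ (linkPartC_mem_suppIn hqL),
        bdry_linkPartC_eq_zero (downClosed_linkC hL {w}) hLwU hqL hqd hu⟩))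
  choose! f hf hfq using hcyc
  refine mem_zbnd.2
    ⟨restrictC (Disjoint · {w}) b + (restrictC (Disjoint · U) q + ∑ u ∈ U, f u),
    add_mem (restrictC_mem_suppIn_delV hbD) (add_mem
      (suppIn_mono (delV_linkC_subset_delV_delV hL U w) _ (restrictC_mem_suppIn_delV hqL))
      (sum_mem fun u hu => suppIn_mono (delV_mono (hL.linkC_subset_delV_of_mem hLU hu) _) _
        (hf u hu))), ?_⟩
  rw [map_add, map_add, map_sum, sum_congr rfl hfq, ← hq, hqe, hbw]

end Vanishing

theorem Finset.sum_sum_eq_zero_of_antisymm {ι M : Type*} [Fintype ι] [AddCommGroup M]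
    (f : ι → ι → M) (hf : ∀ i j, f i j = -f j i) (hdiag : ∀ i, f i i = 0) :
    ∑ i, ∑ j, f i j = 0 := by
  rw [← sum_product']
  refine sum_ninvolution Prod.swap (fun p => by simp [hf p.1 p.2]) (fun ⟨i, j⟩ hij h => hij ?_)
    (fun _ => mem_product.2 ⟨mem_univ _, mem_univ _⟩) Prod.swap_swap
  obtain rfl : j = i := congrArg Prod.fst h
  exact hdiag j

section Connectivity

open scoped Classical

variable {k : Type*} [Field k] {V : Type*} [Fintype V] {Γ : Finset (Finset V)}

attribute [local instance] vOrd

noncomputable local instance (priority := high) : DecidableEq V := Classical.decEq V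

def EdgeConnected (Γ : Finset (Finset V)) (x y : V) : Prop :=
  Relation.ReflTransGen (fun a b => ({a, b} : Finset V) ∈ Γ) x y

theorem bdry_single_singleton (v : V) :
    bdry k 0 (Finsupp.single ⟨{v}, card_singleton v⟩ 1)
      = Finsupp.single ⟨∅, card_empty⟩ 1 := by
  ext t
  obtain ⟨t, ht⟩ := t
  obtain rfl := card_eq_zero.1 ht
  rw [bdry_single_apply, sum_eq_single v]
  · simp [insertFace, vIdx_singleton]
  · intro y _ hyv
    simp [insertFace, hyv.symm]
  · simp

/-- The two ends of each edge of `b` cancel. -/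
theorem sum_bdry_apply_singleton_eq_zero (b : ChSp k V 2) (P : V → Prop)
    (hP : ∀ s, b s ≠ 0 → ∀ x ∈ s.1, ∀ y ∈ s.1, P x → P y) :
    ∑ v, (if P v then bdry k 1 b ⟨{v}, card_singleton v⟩ else 0) = 0 := by
  let g : Finset V → k := fun s => if h : s.card = 2 then b ⟨s, h⟩ else 0
  let F : V → V → k := fun v z => if P v ∧ z ≠ v then (-1) ^ vIdx {z, v} z * g {z, v} else 0
  have hF : ∀ v, (if P v then bdry k 1 b ⟨{v}, card_singleton v⟩ else 0) = ∑ z, F v z := by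
    intro v
    by_cases hv : P v
    · rw [if_pos hv, bdry_apply]
      refine sum_congr rfl fun z _ => ?_
      by_cases hzv : z = v
      · simp [F, hzv]
      · rw [dif_neg (by simpa using hzv)]
        simp [F, g, hv, hzv, insertFace, card_pair hzv]
    · simp [F, hv]
  rw [sum_congr rfl fun v _ => hF v]
  refine sum_sum_eq_zero_of_antisymm F (fun v z => ?_) (fun v => by simp [F])
  by_cases hzv : z = v
  · simp [F, hzv]
  have hpair : ({v, z} : Finset V) = {z, v} := pair_comm v z
  by_cases hg : g {z, v} = 0
  · simp [F, hpair, hg]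
  have hcard : ({z, v} : Finset V).card = 2 := card_pair hzv
  have hb : b ⟨{z, v}, hcard⟩ ≠ 0 := by simpa [g, hcard] using hg
  have hPzv : P v ↔ P z :=
    ⟨hP _ hb v (by simp) z (by simp), hP _ hb z (by simp) v (by simp)⟩
  have hsign : (-1 : k) ^ vIdx {z, v} z = -(-1) ^ vIdx {z, v} v :=
    eq_neg_of_add_eq_zero_left (neg_one_pow_add_neg_one_pow_eq_zero
      (vIdx_pair_add_vIdx_pair hzv))
  simp only [F, hpair, hPzv, hsign, hzv, Ne.symm hzv, ne_eq, not_false_eq_true, and_true]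
  split_ifs <;> ring

theorem edgeConnected_of_hVanish_zero (h0 : HVanish k Γ 0) {x y : V} (hx : {x} ∈ Γ)
    (hy : {y} ∈ Γ) : EdgeConnected Γ x y := by
  by_contra hxy
  let c : ChSp k V 1 :=
    Finsupp.single ⟨{x}, card_singleton x⟩ 1 - Finsupp.single ⟨{y}, card_singleton y⟩ 1
  have hc : c ∈ zcyc k Γ 1 := mem_zcyc_succ.2
    ⟨sub_mem (single_mem_suppIn hx 1) (single_mem_suppIn hy 1),
      by simp [c, bdry_single_singleton]⟩
  obtain ⟨b, hb, hbc⟩ := mem_zbnd.1 ((hVanish_natCast_iff 0).1 h0 hc)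
  have hclosed : ∀ s, b s ≠ 0 → ∀ a ∈ s.1, ∀ z ∈ s.1,
      EdgeConnected Γ x a → EdgeConnected Γ x z := by
    intro s hs a ha z hz hxa
    by_cases haz : a = z
    · exact haz ▸ hxa
    have hs2 : ({a, z} : Finset V) = s.1 := eq_of_subset_of_card_le
      (insert_subset ha (singleton_subset_iff.2 hz)) (by rw [s.2, card_pair haz])
    exact hxa.tail (hs2 ▸ mem_suppIn_iff.1 hb s hs)
  have hsum := sum_bdry_apply_singleton_eq_zero b (EdgeConnected Γ x) hclosed
  have hyx : y ≠ x := by rintro rfl; exact hxy .refl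
  have hterm : ∀ v, (if EdgeConnected Γ x v then c ⟨{v}, card_singleton v⟩ else 0)
      = if v = x then 1 else 0 := by
    intro v
    by_cases hvx : v = x
    · subst hvx
      simp [c, hyx, show EdgeConnected Γ v v from .refl]
    · by_cases hv : EdgeConnected Γ x v
      · have hvy : v ≠ y := by rintro rfl; exact hxy hv
        simp [c, hv, Ne.symm hvy, hvx]
      · simp [hv, hvx]
  rw [hbc, sum_congr rfl fun v _ => hterm v] at hsum
  simp at hsum

end Connectivity

section CohenMacaulay

open scoped Classical

variable {k : Type*} [Field k] {V : Type*} [Fintype V] {K : Finset (Finset V)} {U σ : Finset V}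
  {d : ℕ}

theorem isCM_linkC (hCM : IsCM k K) (σ : Finset V) : IsCM k (linkC K σ) := by
  intro τ hτ i hi
  obtain ⟨hτσ, hτK⟩ := mem_linkC.1 hτ
  rw [linkC_linkC hτσ] at hi ⊢
  exact hCM _ (union_comm τ σ ▸ hτK) i hi

theorem IsFacet.card_eq_of_pureCard_linkC {F : Finset V} (hF : IsFacet K F) {x : V} (hx : x ∈ F)
    {m : ℕ} (hpure : PureCard (linkC K {x}) m) : #F = m + 1 := by
  have h := hpure _ (isFacet_linkC_erase hF hx)
  rw [card_erase_of_mem hx] at h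
  have := card_pos.2 ⟨x, hx⟩
  omega

/-- Vertex links are pure by induction, so the facets through the two ends of an edge have the
same size; `H̃₀ = 0` connects any two vertices by edges. -/
theorem pureCard_sup_card_of_isCM (hK : DownClosed K) (hCM : IsCM k K) :
    PureCard K (K.sup card) := by
  induction hN : K.sup card using Nat.strong_induction_on generalizing K with
  | _ N ih =>
  have hcard : ∀ x G, IsFacet K G → x ∈ G → #G = (linkC K {x}).sup card + 1 :=
    fun x G hG hx => hG.card_eq_of_pureCard_linkC hx <| ih _
      (hN ▸ sup_card_linkC_singleton_lt ((card_pos.2 ⟨x, hx⟩).trans_le (le_sup hG.1)) x)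
      (downClosed_linkC hK _) (isCM_linkC hCM _) rfl
  intro F hF
  have hFN : #F ≤ N := hN ▸ le_sup hF.1
  rcases F.eq_empty_or_nonempty with rfl | ⟨x, hx⟩
  · rw [← hN, card_empty, eq_comm, ← Nat.le_zero]
    exact Finset.sup_le fun t ht => by rw [← hF.2 t ht (empty_subset t), card_empty]
  have hx1 := card_pos.2 ⟨x, hx⟩
  by_cases hN1 : N ≤ 1
  · omega
  obtain ⟨G, hG, hGN⟩ := exists_mem_eq_sup K ⟨F, hF.1⟩ card
  obtain ⟨y, hy⟩ : G.Nonempty := card_pos.1 (by omega)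
  have h0 : HVanish k K 0 := by
    have h := hCM ∅ (hK ∅ F hF.1 (empty_subset F)) 0
    simp only [linkC_empty, dimC, hN] at h
    exact h (by omega)
  have hconst : ∀ z, EdgeConnected K x z →
      (linkC K {x}).sup card = (linkC K {z}).sup card := by
    intro z hz
    induction hz with
    | refl => rfl
    | tail _ hab ih' =>
      obtain ⟨H, hH, hsub⟩ := exists_isFacet_superset hab
      have := hcard _ H hH (hsub (mem_insert_self _ _))
      have := hcard _ H hH (hsub (mem_insert_of_mem (mem_singleton_self _)))
      omega
  have := hconst y (edgeConnected_of_hVanish_zero h0 (hK _ F hF.1 (singleton_subset_iff.2 hx))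
    (hK _ G hG (singleton_subset_iff.2 hy)))
  have := hcard x F hF hx
  have := hcard y G (isFacet_of_card_eq_sup hG hGN.symm) hy
  omega

theorem pureCard_of_isCM (hK : DownClosed K) (hCM : IsCM k K) (hdim : dimC K = d - 1) :
    PureCard K d := by
  have h := pureCard_sup_card_of_isCM hK hCM
  rwa [show K.sup card = d by unfold dimC at hdim; omega] at h

theorem IsCM.hVanish_linkC (hCM : IsCM k K) (hK : DownClosed K) (hpure : PureCard K d)
    (σ : Finset V) {i : ℤ} (hi : i < d - #σ - 1) : HVanish k (linkC K σ) i := by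
  by_cases hσ : σ ∈ K
  · refine hCM σ hσ i ?_
    rw [(hpure.linkC σ).dimC_eq ⟨∅, empty_mem_linkC hσ⟩, Nat.cast_sub (hpure.card_le hσ)]
    exact hi
  · rw [hK.linkC_eq_empty hσ]
    exact hVanish_empty i

theorem IsCM.hVanish_linkC_linkC (hCM : IsCM k K) (hK : DownClosed K) (hpure : PureCard K d)
    {v : V} (hv : v ∉ σ) {i : ℤ} (hi : i < d - #σ - 2) :
    HVanish k (linkC (linkC K σ) {v}) i := by
  rw [linkC_linkC (disjoint_singleton_left.2 hv)]
  refine hCM.hVanish_linkC hK hpure _ ?_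
  rw [card_union_of_disjoint (disjoint_singleton_right.2 hv), card_singleton]
  push_cast
  omega

theorem Is2CM.isCM_delV_singleton (h : Is2CM k K) (hK : DownClosed K) (v : V) :
    IsCM k (delV K {v}) ∧ dimC (delV K {v}) = dimC K := by
  by_cases hv : {v} ∈ K
  · exact h.2 v hv
  · rw [hK.delV_singleton_eq_self hv]
    exact ⟨h.1, rfl⟩

theorem hVanish_delV_linkC (hCM : IsCM k K) (hK : DownClosed K) (hpure : PureCard K d)
    (hT : ∀ s ∈ K, #(s ∩ U) ≤ 1) (hσU : Disjoint σ U) (n : ℕ)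
    (hn : (n : ℤ) < d - #σ - 2) :
    HVanish k (delV (linkC K σ) U) n :=
  hVanish_delV (downClosed_linkC hK σ) (fun _ hs => card_inter_le_one_of_mem_linkC hT hs) n
    (hCM.hVanish_linkC hK hpure σ (by omega))
    (fun _ hu => hCM.hVanish_linkC_linkC hK hpure (disjoint_right.1 hσU hu) hn)

theorem hVanish_delV_linkC_linkC (hK : DownClosed K) (hpure : PureCard K d)
    (hlink : ∀ u ∈ U, Is2CM k (linkC K {u})) {u v : V} (hu : u ∈ U) (hvσ : v ∉ σ)
    {i : ℤ} (hi : i < d - #σ - 2) : HVanish k (delV (linkC (linkC K σ) {u}) {v}) i := by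
  rw [linkC_comm, delV_linkC (disjoint_singleton_right.2 hvσ)]
  by_cases huK : {u} ∈ K
  · have hΛ := (hlink u hu).isCM_delV_singleton (downClosed_linkC hK _) v
    have hΛK : DownClosed (delV (linkC K {u}) {v}) := downClosed_delV (downClosed_linkC hK _) _
    have hd := hpure.card_le huK
    rw [card_singleton] at hd
    have hpureΛ : PureCard (delV (linkC K {u}) {v}) (d - 1) := by
      refine pureCard_of_isCM hΛK hΛ.1 ?_
      rw [hΛ.2, (hpure.linkC {u}).dimC_eq ⟨∅, empty_mem_linkC huK⟩, card_singleton]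
    exact hΛ.1.hVanish_linkC hΛK hpureΛ σ (by omega)
  · have hempty : linkC (delV (linkC K {u}) {v}) σ = ∅ := by
      rw [hK.linkC_eq_empty huK]
      ext γ
      simp
    rw [hempty]
    exact hVanish_empty i

theorem isCM_delV (hCM : IsCM k K) (hK : DownClosed K) (hpure : PureCard K d)
    (hU : FacetTransversal K U) : IsCM k (delV K U) := by
  intro σ hσ i hi
  obtain ⟨hσK, hσU⟩ := mem_delV.1 hσ
  have hσd := hpure.card_lt_of_disjoint hU hσK hσU
  rw [← delV_linkC hσU] at hi ⊢
  refine hVanish_of_forall_natCast (downClosed_delV (downClosed_linkC hK σ) U)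
    ((hpure.linkC σ).dimC_delV_le (hU.linkC hσU)) (fun n hn => ?_) hi
  exact hVanish_delV_linkC hCM hK hpure hU.card_inter_le_one hσU n (by omega)

theorem isCM_delV_delV (hCM : IsCM k K) (hK : DownClosed K) (hpure : PureCard K d)
    (hU : FacetTransversal K U) (hlink : ∀ u ∈ U, Is2CM k (linkC K {u})) {v : V}
    (hv : v ∉ U) : IsCM k (delV (delV K U) {v}) := by
  intro σ hσ i hi
  obtain ⟨⟨hσK, hσU⟩, hσv⟩ := by simpa only [mem_delV] using hσ
  have hvσ : v ∉ σ := disjoint_singleton_right.1 hσv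
  have hσd := hpure.card_lt_of_disjoint hU hσK hσU
  rw [← delV_linkC hσv, ← delV_linkC hσU] at hi ⊢
  refine hVanish_of_forall_natCast
    (downClosed_delV (downClosed_delV (downClosed_linkC hK σ) U) _)
    ((dimC_mono (delV_subset _ _)).trans ((hpure.linkC σ).dimC_delV_le (hU.linkC hσU)))
    (fun n hn => ?_) hi
  have hn' : (n : ℤ) < d - #σ - 2 := by omega
  exact hVanish_delV_delV (downClosed_linkC hK σ)
    (fun _ hs => card_inter_le_one_of_mem_linkC hU.card_inter_le_one hs) hv n
    (hVanish_delV_linkC hCM hK hpure hU.card_inter_le_one hσU n hn')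
    (hCM.hVanish_linkC_linkC hK hpure hvσ hn')
    (fun u hu => hVanish_delV_linkC_linkC hK hpure hlink hu hvσ hn')

theorem dimC_delV_delV (hK : DownClosed K) (hpure : PureCard K d) (hU : FacetTransversal K U)
    (hlink : ∀ u ∈ U, Is2CM k (linkC K {u})) {v : V} (hv : {v} ∈ delV K U) :
    dimC (delV (delV K U) {v}) = dimC (delV K U) := by
  obtain ⟨hvK, hvU⟩ := mem_delV.1 hv
  obtain ⟨F, hF, hvF⟩ := exists_isFacet_superset hvK
  obtain ⟨u, hu⟩ := card_eq_one.1 (hU F hF)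
  obtain ⟨huF, huU⟩ := mem_inter.1 (hu ▸ mem_singleton_self u : u ∈ F ∩ U)
  have hvu : v ≠ u := fun h => disjoint_left.1 hvU (mem_singleton_self v) (h ▸ huU)
  have hvlk : {v} ∈ linkC K {u} := mem_linkC.2 ⟨disjoint_singleton.2 hvu,
    hK _ F hF.1 (union_subset hvF (singleton_subset_iff.2 huF))⟩
  have huK : {u} ∈ K := hK _ F hF.1 (singleton_subset_iff.2 huF)
  refine le_antisymm (dimC_mono (delV_subset _ _)) ?_
  calc dimC (delV K U) ≤ ((d - 1 : ℕ) : ℤ) - 1 := hpure.dimC_delV_le hU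
    _ = dimC (delV (linkC K {u}) {v}) := by
      rw [((hlink u huU).2 v hvlk).2, (hpure.linkC {u}).dimC_eq ⟨∅, empty_mem_linkC huK⟩,
        card_singleton]
    _ ≤ dimC (delV (delV K U) {v}) := dimC_mono (delV_mono
      (hK.linkC_subset_delV_of_mem hU.card_inter_le_one huU) _)

end CohenMacaulay

open scoped Classical in
theorem stmt6_general (k : Type*) [Field k] (V : Type*) [Fintype V]
    (K : Finset (Finset V)) (hK : DownClosed K)
    (U : Finset V) (hU : ∀ s : Finset V, IsFacet K s → (s ∩ U).card = 1)
    (hCM : IsCM k K) (hlink : ∀ u ∈ U, Is2CM k (linkC K {u})) :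
    Is2CM k (delV K U) := by
  have hpure := pureCard_sup_card_of_isCM hK hCM
  refine ⟨isCM_delV hCM hK hpure hU, fun v hv => ⟨?_, dimC_delV_delV hK hpure hU hlink hv⟩⟩
  exact isCM_delV_delV hCM hK hpure hU hlink (disjoint_singleton_left.1 (mem_delV.1 hv).2)

open scoped Classical in
/-- If `Δ` is a pure `(d-1)`-dimensional Cohen-Macaulay complex over `k`
with `d - 1 ≥ 1`, `U` a set of vertices meeting every facet in exactly one vertex, and all
links of vertices of `U` are doubly Cohen-Macaulay over `k`, then `Δ ∖ U` is doubly
Cohen-Macaulay over `k`. -/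
theorem stmt6 (k : Type*) [Field k] (V : Type*) [Fintype V]
    (K : Finset (Finset V)) (hK : DownClosed K)
    (d : ℕ) (hd : 2 ≤ d) (hpure : PureCard K d) (hdim : dimC K = (d : ℤ) - 1)
    (U : Finset V) (hU : ∀ s : Finset V, IsFacet K s → (s ∩ U).card = 1)
    (hCM : IsCM k K) (hlink : ∀ u ∈ U, Is2CM k (linkC K {u})) :
    Is2CM k (delV K U) :=
  stmt6_general k V K hK U hU hCM hlink
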